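/- arXiv:1502.04882 — 5 statements merged into one kernel-verified Lean document; each statement's English description precedes it below -/
import Mathlib

section
/- A positive n×n matrix A = (a_{ij}) maps every nonnegative nonincreasing vector to a nonincreasing vector if and only if for each k = 1,...,n and each i = 1,...,n-1 one has ∑_{j=1}^k a_{i,j} ≥ ∑_{j=1}^k a_{i+1,j}. -/
/-!
Writing `A *ᵥ x` row by row, monotonicity of `A *ᵥ x` amounts to `A (i+1) ⬝ᵥ x ≤ A i ⬝ᵥ x` for
adjacent rows. Testing against the indicator vector of `{j | j ≤ k}`, which is nonnegative and
nonincreasing, gives the partial-sum condition. Conversely, a nonnegative nonincreasing `x` is a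
nonnegative combination of these indicator vectors (Abel summation), so the partial-sum condition
forces `A (i+1) ⬝ᵥ x ≤ A i ⬝ᵥ x`.
-/

open Finset Matrix

namespace Fin

lemma antitone_iff_le_of_val_add_one_lt {α : Type*} [Preorder α] {n : ℕ} {f : Fin n → α} :
    Antitone f ↔ ∀ (i : Fin n) (hi : (i : ℕ) + 1 < n), f ⟨i + 1, hi⟩ ≤ f i := by
  cases n with
  | zero => exact ⟨fun _ i => i.elim0, fun _ i => i.elim0⟩
  | succ m =>
    rw [Fin.antitone_iff_succ_le]
    exact ⟨fun h i hi => h ⟨i, by omega⟩, fun h i => h i.castSucc (by simp)⟩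

variable {R : Type*} [Ring R] [PartialOrder R] [IsOrderedRing R]

theorem dotProduct_nonneg_of_partial_sums_nonneg {n : ℕ} {c x : Fin n → R}
    (hc : ∀ k, 0 ≤ ∑ j ∈ Iic k, c j) (hx : Antitone x) (hx0 : 0 ≤ x) : 0 ≤ c ⬝ᵥ x := by
  induction n with
  | zero => simp
  | succ n ih =>
    set m := x (last n)
    -- peel off the constant vector `m`; what is left vanishes at the last index
    have hsplit : c ⬝ᵥ x = (fun j => c (castSucc j)) ⬝ᵥ (fun j => x (castSucc j) - m)
        + (∑ j ∈ Iic (last n), c j) * m := by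
      rw [← top_eq_last, Iic_top]
      simp only [dotProduct, mul_sub, sum_sub_distrib, ← sum_mul, Fin.sum_univ_castSucc, m]
      rw [add_mul]; abel
    rw [hsplit]
    refine add_nonneg (ih (fun k => ?_) ?_ ?_) (mul_nonneg (hc _) (hx0 _))
    · simpa only [Fin.sum_Iic_castSucc] using hc k.castSucc
    · exact fun i j hij => sub_le_sub_right (hx (castSucc_le_castSucc_iff.2 hij)) m
    · exact fun j => sub_nonneg.2 (hx (le_last _))

theorem dotProduct_le_dotProduct_of_partial_sums_le {n : ℕ} {a b x : Fin n → R}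
    (h : ∀ k, ∑ j ∈ Iic k, b j ≤ ∑ j ∈ Iic k, a j) (hx : Antitone x) (hx0 : 0 ≤ x) :
    b ⬝ᵥ x ≤ a ⬝ᵥ x := by
  rw [← sub_nonneg, ← sub_dotProduct]
  refine dotProduct_nonneg_of_partial_sums_nonneg (fun k => ?_) hx hx0
  simpa only [Pi.sub_apply, sum_sub_distrib, sub_nonneg] using h k

end Fin

section

variable {ι R : Type*} [Preorder ι] [Semiring R]

lemma antitone_ite_le [PartialOrder R] [ZeroLEOneClass R] (k : ι) [DecidablePred (· ≤ k)] :
    Antitone fun j => if j ≤ k then (1 : R) else 0 := by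
  intro i j hij
  by_cases hj : j ≤ k
  · simp [hj, hij.trans hj]
  · simp only [hj, if_false]; split_ifs <;> simp

lemma dotProduct_ite_le [Fintype ι] [LocallyFiniteOrderBot ι] (a : ι → R) (k : ι)
    [DecidablePred (· ≤ k)] : a ⬝ᵥ (fun j => if j ≤ k then 1 else 0) = ∑ j ∈ Iic k, a j := by
  simp [dotProduct, mul_ite, Finset.sum_ite, filter_ge_eq_Iic]

end

theorem positive_matrix_monotone_iff_general {n : ℕ} (A : Matrix (Fin n) (Fin n) ℝ) :
    (∀ x : Fin n → ℝ, (∀ i, 0 ≤ x i) → (∀ i j : Fin n, i ≤ j → x j ≤ x i) →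
      ∀ i j : Fin n, i ≤ j → A.mulVec x j ≤ A.mulVec x i)
    ↔ (∀ k : Fin n, ∀ i : Fin n, ∀ hi : (i : ℕ) + 1 < n,
        ∑ j ∈ Finset.Iic k, A ⟨(i : ℕ) + 1, hi⟩ j ≤ ∑ j ∈ Finset.Iic k, A i j) := by
  constructor
  · intro H k i hi
    have hk := H _ (fun j => by positivity) (antitone_ite_le k)
    simpa only [mulVec, dotProduct_ite_le] using Fin.antitone_iff_le_of_val_add_one_lt.1 hk i hi
  · intro hS x hx0 hx
    refine Fin.antitone_iff_le_of_val_add_one_lt.2 fun i hi => ?_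
    exact Fin.dotProduct_le_dotProduct_of_partial_sums_le (fun k => hS k i hi) hx hx0

/-- A positive n×n matrix maps every nonnegative nonincreasing vector to a
nonincreasing vector iff its partial row sums are nonincreasing in the row index. -/
theorem positive_matrix_monotone_iff {n : ℕ} (A : Matrix (Fin n) (Fin n) ℝ)
    (hpos : ∀ i j, 0 ≤ A i j) :
    (∀ x : Fin n → ℝ, (∀ i, 0 ≤ x i) → (∀ i j : Fin n, i ≤ j → x j ≤ x i) →
      ∀ i j : Fin n, i ≤ j → A.mulVec x j ≤ A.mulVec x i)
    ↔ (∀ k : Fin n, ∀ i : Fin n, ∀ hi : (i : ℕ) + 1 < n,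
        ∑ j ∈ Finset.Iic k, A ⟨(i : ℕ) + 1, hi⟩ j ≤ ∑ j ∈ Finset.Iic k, A i j) :=
  positive_matrix_monotone_iff_general A
end

section
/- Let a, b ∈ ℝ^n be nonnegative nonincreasing vectors with ∑_{i=1}^k b_i ≤ ∑_{i=1}^k a_i for all k < n and ∑_{i=1}^n b_i = ∑_{i=1}^n a_i. Then there exists a doubly stochastic matrix A which is monotone (maps nonnegative nonincreasing vectors to nonincreasing vectors) such that Aa = b. -/
/-!
Averaging the first `u + 1` coordinates is a doubly stochastic matrix that maps antitone vectors
to antitone vectors. The prefix averages of `a` start at `a 0 ≥ b 0` and end at the mean of `a`,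
which is `≤ b 0`, so some convex combination of two consecutive prefix-averaging matrices turns
`a` into a vector `y` with `y 0 = b 0` whose prefix sums are either `(k + 1) * b 0` or those of
`a`; both dominate the prefix sums of `b`. The tails of `y` and `b` then satisfy the hypotheses
in one dimension less, and the matrix found for them, bordered by a `1` in the corner, composed
with the averaging step, does the job.
-/

def DoublyStochastic {n : ℕ} (A : Matrix (Fin n) (Fin n) ℝ) : Prop :=
  (∀ i j, 0 ≤ A i j) ∧ (∀ i, ∑ j, A i j = 1) ∧ (∀ j, ∑ i, A i j = 1)

/-- A matrix is monotone if it maps nonnegative nonincreasing vectors to nonincreasing vectors. -/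
def MonotoneMatrix {n : ℕ} (A : Matrix (Fin n) (Fin n) ℝ) : Prop :=
  ∀ x : Fin n → ℝ, (∀ i, 0 ≤ x i) → (∀ i j : Fin n, i ≤ j → x j ≤ x i) →
    ∀ i j : Fin n, i ≤ j → A.mulVec x j ≤ A.mulVec x i

open Finset Matrix

section Averaging

variable {ι : Type*} [DecidableEq ι]

noncomputable def averagingMatrix (s : Finset ι) : Matrix ι ι ℝ :=
  Matrix.of fun i j => if i ∈ s ∧ j ∈ s then (#s : ℝ)⁻¹ else if i = j then 1 else 0

lemma averagingMatrix_transpose (s : Finset ι) : (averagingMatrix s)ᵀ = averagingMatrix s := by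
  ext i j
  simp [averagingMatrix, and_comm, eq_comm]

variable [Fintype ι]

lemma averagingMatrix_mulVec (s : Finset ι) (x : ι → ℝ) (i : ι) :
    (averagingMatrix s *ᵥ x) i = if i ∈ s then (∑ j ∈ s, x j) / #s else x i := by
  by_cases hi : i ∈ s
  · have hrow : ∀ j, averagingMatrix s i j = if j ∈ s then (#s : ℝ)⁻¹ else 0 := fun j => by
      by_cases hj : j ∈ s
      · simp [averagingMatrix, hi, hj]
      · simp [averagingMatrix, hi, hj, ne_of_mem_of_not_mem hi hj]
    simp [mulVec, dotProduct, hrow, hi, ite_mul, div_eq_inv_mul, mul_sum]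
  · simp [averagingMatrix, mulVec, dotProduct, hi]

lemma averagingMatrix_mem_doublyStochastic (s : Finset ι) :
    averagingMatrix s ∈ doublyStochastic ℝ ι := by
  have hrow : averagingMatrix s *ᵥ 1 = 1 := by
    ext i
    rw [averagingMatrix_mulVec]
    split_ifs with hi
    · simp [card_ne_zero_of_mem hi]
    · rfl
  refine mem_doublyStochastic.2 ⟨fun i j => ?_, hrow, ?_⟩
  · simp only [averagingMatrix, of_apply]
    split_ifs <;> positivity
  · rw [← mulVec_transpose, averagingMatrix_transpose, hrow]

lemma sum_averagingMatrix_mulVec_of_subset {s t : Finset ι} (hst : s ⊆ t) (x : ι → ℝ) :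
    ∑ i ∈ t, (averagingMatrix s *ᵥ x) i = ∑ i ∈ t, x i := by
  rw [← sum_sdiff hst, ← sum_sdiff hst (f := x)]
  congr 1
  · refine sum_congr rfl fun i hi => ?_
    rw [averagingMatrix_mulVec, if_neg (mem_sdiff.1 hi).2]
  · rcases s.eq_empty_or_nonempty with rfl | hs
    · simp
    · rw [sum_congr rfl fun i hi => by rw [averagingMatrix_mulVec, if_pos hi], sum_const,
        nsmul_eq_mul, mul_div_cancel₀ _ (by simpa using hs.ne_empty)]

lemma antitone_averagingMatrix_mulVec [LinearOrder ι] {s : Finset ι}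
    (hs : IsLowerSet (s : Set ι)) {x : ι → ℝ} (hx : Antitone x) :
    Antitone (averagingMatrix s *ᵥ x) := by
  intro i j hij
  by_cases hj : j ∈ s
  · simp only [averagingMatrix_mulVec, hj, mem_coe.1 (hs hij hj), if_true, le_refl]
  simp only [averagingMatrix_mulVec, hj, if_false]
  split_ifs with hi
  · have hle : ∀ m ∈ s, x j ≤ x m := fun m hm =>
      hx (le_of_lt (lt_of_not_ge fun hjm => hj (hs hjm hm)))
    rw [le_div_iff₀ (by exact_mod_cast card_pos.2 ⟨i, hi⟩), mul_comm, ← nsmul_eq_mul]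
    exact card_nsmul_le_sum s x (x j) hle
  · exact hx hij

end Averaging

lemma mulVec_le_of_mem_rowStochastic {ι : Type*} [Fintype ι] [DecidableEq ι] {M : Matrix ι ι ℝ}
    (hM : M ∈ rowStochastic ℝ ι) {x : ι → ℝ} {c : ℝ} (hx : ∀ j, x j ≤ c) (i : ι) :
    (M *ᵥ x) i ≤ c :=
  calc (M *ᵥ x) i = ∑ j, M i j * x j := rfl
    _ ≤ ∑ j, M i j * c := sum_le_sum fun j _ => mul_le_mul_of_nonneg_left (hx j) (hM.1 i j)
    _ = c := by rw [← sum_mul, sum_row_of_mem_rowStochastic hM, one_mul]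

section MonotoneMatrix

variable {n : ℕ} {A B : Matrix (Fin n) (Fin n) ℝ}

lemma MonotoneMatrix.add (hA : MonotoneMatrix A) (hB : MonotoneMatrix B) :
    MonotoneMatrix (A + B) := fun x hx0 hx i j hij => by
  simpa only [add_mulVec, Pi.add_apply] using add_le_add (hA x hx0 hx i j hij) (hB x hx0 hx i j hij)

lemma MonotoneMatrix.smul (hA : MonotoneMatrix A) {c : ℝ} (hc : 0 ≤ c) :
    MonotoneMatrix (c • A) := fun x hx0 hx i j hij => by
  simpa only [smul_mulVec, Pi.smul_apply, smul_eq_mul] using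
    mul_le_mul_of_nonneg_left (hA x hx0 hx i j hij) hc

lemma MonotoneMatrix.mul (hA : MonotoneMatrix A) (hB : MonotoneMatrix B)
    (hB0 : ∀ i j, 0 ≤ B i j) : MonotoneMatrix (A * B) := fun x hx0 hx => by
  have hBx0 : ∀ i, 0 ≤ (B *ᵥ x) i := fun i => by
    simp only [mulVec, dotProduct]
    exact sum_nonneg fun j _ => mul_nonneg (hB0 i j) (hx0 j)
  rw [← mulVec_mulVec]
  exact hA _ hBx0 (hB x hx0 hx)

lemma monotoneMatrix_averagingMatrix_Iic (u : Fin n) : MonotoneMatrix (averagingMatrix (Iic u)) :=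
  fun _ _ hx => antitone_averagingMatrix_mulVec (by simpa using isLowerSet_Iic u)
    fun _ _ h => hx _ _ h

end MonotoneMatrix

section OneBlockDiag

variable {n : ℕ}

def oneBlockDiag (B : Matrix (Fin n) (Fin n) ℝ) : Matrix (Fin (n + 1)) (Fin (n + 1)) ℝ :=
  Matrix.of (vecCons (vecCons 1 0) fun i => vecCons 0 (B i))

lemma oneBlockDiag_mulVec (B : Matrix (Fin n) (Fin n) ℝ) (x : Fin (n + 1) → ℝ) :
    oneBlockDiag B *ᵥ x = vecCons (x 0) (B *ᵥ Fin.tail x) := by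
  ext i
  cases i using Fin.cases <;> simp [oneBlockDiag, mulVec, dotProduct, Fin.sum_univ_succ, Fin.tail]

lemma oneBlockDiag_transpose (B : Matrix (Fin n) (Fin n) ℝ) :
    (oneBlockDiag B)ᵀ = oneBlockDiag Bᵀ := by
  ext i j
  cases i using Fin.cases <;> cases j using Fin.cases <;> simp [oneBlockDiag]

lemma oneBlockDiag_mulVec_one {B : Matrix (Fin n) (Fin n) ℝ} (hB : B *ᵥ 1 = 1) :
    oneBlockDiag B *ᵥ 1 = 1 := by
  rw [oneBlockDiag_mulVec, show Fin.tail (1 : Fin (n + 1) → ℝ) = 1 from rfl, hB]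
  ext i
  cases i using Fin.cases <;> simp

lemma oneBlockDiag_mem_doublyStochastic {B : Matrix (Fin n) (Fin n) ℝ}
    (hB : B ∈ doublyStochastic ℝ (Fin n)) : oneBlockDiag B ∈ doublyStochastic ℝ (Fin (n + 1)) := by
  refine mem_doublyStochastic.2 ⟨fun i j => ?_, oneBlockDiag_mulVec_one hB.2.1, ?_⟩
  · cases i using Fin.cases <;> cases j using Fin.cases <;> simp [oneBlockDiag, hB.1]
  · rw [← mulVec_transpose, oneBlockDiag_transpose,
      oneBlockDiag_mulVec_one (transpose_mem_doublyStochastic_iff.2 hB).2.1]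

lemma antitone_vecCons_of_le {α : Type*} [Preorder α] {a : α} {f : Fin n → α} (hf : Antitone f)
    (ha : ∀ i, f i ≤ a) : Antitone (vecCons a f) := by
  intro i j hij
  cases j using Fin.cases with
  | zero => rw [Fin.le_zero_iff.1 hij]
  | succ j =>
    cases i using Fin.cases with
    | zero => simpa using ha j
    | succ i => simpa using hf (Fin.succ_le_succ_iff.1 hij)

lemma monotoneMatrix_oneBlockDiag {B : Matrix (Fin n) (Fin n) ℝ} (hB : B ∈ rowStochastic ℝ (Fin n))
    (hBm : MonotoneMatrix B) : MonotoneMatrix (oneBlockDiag B) := fun x hx0 hx => by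
  rw [oneBlockDiag_mulVec]
  exact antitone_vecCons_of_le
    (hBm _ (fun i => hx0 _) fun i j h => hx _ _ (Fin.succ_le_succ_iff.2 h))
    (mulVec_le_of_mem_rowStochastic hB fun j => hx _ _ (Fin.zero_le _))

end OneBlockDiag

lemma Fin.exists_adjacent_le_le {α : Type*} [LinearOrder α] {n : ℕ} (f : Fin (n + 1) → α) {c : α}
    (h0 : c ≤ f 0) (hlast : f (Fin.last n) ≤ c) :
    ∃ u v : Fin (n + 1), u ≤ v ∧ (v : ℕ) ≤ u + 1 ∧ c ≤ f u ∧ f v ≤ c := by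
  induction n with
  | zero => exact ⟨0, 0, le_rfl, by simp, h0, hlast⟩
  | succ n ih =>
    by_cases h : f (Fin.last n).castSucc ≤ c
    · obtain ⟨u, v, huv, hvu, hu, hv⟩ := ih (f ∘ Fin.castSucc) h0 h
      exact ⟨u.castSucc, v.castSucc, Fin.castSucc_le_castSucc_iff.2 huv, hvu, hu, hv⟩
    · exact ⟨(Fin.last n).castSucc, Fin.last (n + 1), (Fin.castSucc_lt_last _).le, by simp,
        (lt_of_not_ge h).le, hlast⟩

lemma Fin.sum_Iic_succ {M : Type*} [AddCommMonoid M] {n : ℕ} (f : Fin (n + 1) → M) (k : Fin n) :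
    ∑ i ∈ Iic k.succ, f i = f 0 + ∑ i ∈ Iic k, Fin.tail f i := by
  rw [← Icc_bot, bot_eq_zero, Icc_eq_cons_Ioc (Fin.zero_le _), Finset.sum_cons,
    ← Fin.map_succEmb_Iic, Finset.sum_map]
  rfl

lemma exists_doublyStochastic_monotone_mulVec_eq_on_Iic {n : ℕ} (a : Fin (n + 1) → ℝ) {β : ℝ}
    (h0 : β ≤ a 0) (hsum : ∑ i, a i ≤ (n + 1) * β) :
    ∃ M ∈ doublyStochastic ℝ (Fin (n + 1)), MonotoneMatrix M ∧ ∃ u, (∀ i ≤ u, (M *ᵥ a) i = β) ∧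
      ∀ k, u < k → ∑ i ∈ Iic k, (M *ᵥ a) i = ∑ i ∈ Iic k, a i := by
  set avg : Fin (n + 1) → ℝ := fun u => (∑ j ∈ Iic u, a j) / #(Iic u)
  have hIic0 : Iic (0 : Fin (n + 1)) = {0} := Iic_bot
  have hIicLast : Iic (Fin.last n) = univ := Iic_top
  obtain ⟨u, v, huv, hvu, hu, hv⟩ := Fin.exists_adjacent_le_le avg (c := β)
    (by simpa [avg, hIic0] using h0) (by
      simp only [avg, hIicLast, card_univ, Fintype.card_fin, Nat.cast_add, Nat.cast_one]
      rw [div_le_iff₀ (by positivity)]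
      linarith)
  obtain ⟨p, q, hp, hq, hpq, hβ⟩ : β ∈ segment ℝ (avg u) (avg v) := by
    rw [segment_symm, segment_eq_Icc (hv.trans hu)]
    exact ⟨hv, hu⟩
  refine ⟨p • averagingMatrix (Iic u) + q • averagingMatrix (Iic v),
    convex_doublyStochastic (averagingMatrix_mem_doublyStochastic _)
      (averagingMatrix_mem_doublyStochastic _) hp hq hpq,
    ((monotoneMatrix_averagingMatrix_Iic u).smul hp).add
      ((monotoneMatrix_averagingMatrix_Iic v).smul hq), u, fun i hi => ?_, fun k hk => ?_⟩
  · simpa [avg, add_mulVec, smul_mulVec, averagingMatrix_mulVec, hi, hi.trans huv] using hβ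
  · have hvk : v ≤ k := by omega
    simp only [add_mulVec, smul_mulVec, Pi.add_apply, Pi.smul_apply, sum_add_distrib, ← smul_sum,
      sum_averagingMatrix_mulVec_of_subset (Iic_subset_Iic.2 hk.le),
      sum_averagingMatrix_mulVec_of_subset (Iic_subset_Iic.2 hvk), ← add_smul, hpq, one_smul]

lemma doublyStochastic_iff_mem {n : ℕ} {A : Matrix (Fin n) (Fin n) ℝ} :
    DoublyStochastic A ↔ A ∈ doublyStochastic ℝ (Fin n) :=
  mem_doublyStochastic_iff_sum.symm

theorem exists_doublyStochastic_monotone_of_majorize_general {n : ℕ} (a b : Fin n → ℝ)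
    (hbA : ∀ i j : Fin n, i ≤ j → b j ≤ b i)
    (hmaj : ∀ k : Fin n, ∑ i ∈ Finset.Iic k, b i ≤ ∑ i ∈ Finset.Iic k, a i)
    (hsum : ∑ i, b i = ∑ i, a i) :
    ∃ A : Matrix (Fin n) (Fin n) ℝ,
      DoublyStochastic A ∧ MonotoneMatrix A ∧ A.mulVec a = b := by
  simp only [doublyStochastic_iff_mem]
  induction n with
  | zero => exact ⟨1, one_mem _, fun _ _ _ i => i.elim0, funext fun i => i.elim0⟩
  | succ n ih =>
    have hb0 : ∀ i, b i ≤ b 0 := fun i => hbA 0 i (Fin.zero_le i)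
    obtain ⟨M, hM, hMm, u, hu, hk⟩ := exists_doublyStochastic_monotone_mulVec_eq_on_Iic a
      (by simpa [show Iic (0 : Fin (n + 1)) = {0} from Iic_bot] using hmaj 0)
      (by simpa [← hsum] using sum_le_card_nsmul univ b (b 0) fun i _ => hb0 i)
    have hy0 : (M *ᵥ a) 0 = b 0 := hu 0 (Fin.zero_le u)
    have hby : ∀ k, ∑ i ∈ Iic k, b i ≤ ∑ i ∈ Iic k, (M *ᵥ a) i := fun k => by
      rcases le_or_gt k u with hku | hku
      · exact sum_le_sum fun i hi => (hb0 i).trans_eq (hu i ((mem_Iic.1 hi).trans hku)).symm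
      · exact (hk k hku).symm ▸ hmaj k
    have htail : ∑ i, Fin.tail b i = ∑ i, Fin.tail (M *ᵥ a) i := by
      have h := sum_mulVec_of_mem_doublyStochastic (x := a) hM
      rw [Fin.sum_univ_succ, hy0, ← hsum, Fin.sum_univ_succ] at h
      exact (add_left_cancel h).symm
    obtain ⟨B, hB, hBm, hBy⟩ := ih (Fin.tail (M *ᵥ a)) (Fin.tail b)
      (fun i j h => hbA _ _ (Fin.succ_le_succ_iff.2 h))
      (fun k => by simpa [Fin.sum_Iic_succ, hy0] using hby k.succ) htail
    have hBrow := (mem_doublyStochastic_iff_mem_rowStochastic_and_mem_colStochastic.1 hB).1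
    refine ⟨oneBlockDiag B * M, mul_mem (oneBlockDiag_mem_doublyStochastic hB) hM,
      (monotoneMatrix_oneBlockDiag hBrow hBm).mul hMm fun i j => hM.1 i j, ?_⟩
    rw [← mulVec_mulVec, oneBlockDiag_mulVec, hBy, hy0]
    exact Fin.cons_self_tail b

/-- monotone Hardy–Littlewood–Pólya theorem, doubly stochastic case. -/
theorem exists_doublyStochastic_monotone_of_majorize {n : ℕ} (a b : Fin n → ℝ)
    (ha0 : ∀ i, 0 ≤ a i) (hb0 : ∀ i, 0 ≤ b i)
    (haA : ∀ i j : Fin n, i ≤ j → a j ≤ a i) (hbA : ∀ i j : Fin n, i ≤ j → b j ≤ b i)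
    (hmaj : ∀ k : Fin n, ∑ i ∈ Finset.Iic k, b i ≤ ∑ i ∈ Finset.Iic k, a i)
    (hsum : ∑ i, b i = ∑ i, a i) :
    ∃ A : Matrix (Fin n) (Fin n) ℝ,
      DoublyStochastic A ∧ MonotoneMatrix A ∧ A.mulVec a = b :=
  exists_doublyStochastic_monotone_of_majorize_general a b hbA hmaj hsum
end

section
/- Let a, b ∈ ℝ^n be nonnegative nonincreasing vectors with a_1 > b_1 and ∑_{i=1}^n a_i = ∑_{i=1}^n b_i, and ∑_{i=1}^k b_i ≤ ∑_{i=1}^k a_i for all k. Then there exists an index k ≤ n such that (1/k)∑_{i=1}^k a_i ≤ b_1 < (1/(k-1))∑_{i=1}^{k-1} a_i. -/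
/-! Let `S k = ∑_{i<k} a i` and call `k` good when `S k ≤ k * b 0`. The index `1` is bad because
`a 0 > b 0`, while `n` is good because `S n = ∑_{i<n} b i ≤ n * b 0`. Hence some bad `k ≥ 1` is
followed by a good `k + 1`, and `k + 1` is the required index. -/

theorem Nat.exists_le_lt_not_and_succ {P : ℕ → Prop} {m n : ℕ} (hmn : m ≤ n) (hm : ¬ P m)
    (hn : P n) : ∃ k, m ≤ k ∧ k < n ∧ ¬ P k ∧ P (k + 1) := by
  induction n, hmn using Nat.le_induction with
  | base => exact absurd hn hm
  | succ n hmn ih =>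
    by_cases hPn : P n
    · obtain ⟨k, hmk, hkn, hk⟩ := ih hPn
      exact ⟨k, hmk, by omega, hk⟩
    · exact ⟨n, hmn, n.lt_succ_self, hPn, hn⟩

theorem exists_index_average_le_general {n : ℕ} (hn : 0 < n) (a b : ℕ → ℝ)
    (hbA : ∀ i j, i ≤ j → j < n → b j ≤ b i)
    (hsum : ∑ i ∈ Finset.range n, a i = ∑ i ∈ Finset.range n, b i)
    (h1 : b 0 < a 0) :
    ∃ k, 2 ≤ k ∧ k ≤ n ∧
      (1 / (k : ℝ)) * ∑ i ∈ Finset.range k, a i ≤ b 0 ∧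
      b 0 < (1 / ((k : ℝ) - 1)) * ∑ i ∈ Finset.range (k - 1), a i := by
  have h1_bad : ¬ ∑ i ∈ Finset.range 1, a i ≤ (1 : ℕ) * b 0 := by simpa using h1
  have hn_good : ∑ i ∈ Finset.range n, a i ≤ n * b 0 := by
    rw [hsum]
    simpa using Finset.sum_le_card_nsmul (Finset.range n) b (b 0)
      fun i hi => hbA 0 i i.zero_le (Finset.mem_range.mp hi)
  obtain ⟨k, hk1, hkn, hk_bad, hk_good⟩ :=
    Nat.exists_le_lt_not_and_succ (P := fun k => ∑ i ∈ Finset.range k, a i ≤ k * b 0)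
      hn h1_bad hn_good
  have hk_pos : (0 : ℝ) < k := by exact_mod_cast hk1
  refine ⟨k + 1, by omega, hkn, ?_, ?_⟩
  · rw [one_div_mul_eq_div, div_le_iff₀ (by positivity)]
    linarith
  · simp only [Nat.add_sub_cancel, Nat.cast_add, Nat.cast_one, add_sub_cancel_right]
    rw [one_div_mul_eq_div, lt_div_iff₀ hk_pos]
    linarith

/-- existence of the index `k` with
`(1/k)∑_{i=1}^k a_i ≤ b_1 < (1/(k-1))∑_{i=1}^{k-1} a_i`.
Vectors in ℝ^n are modelled as functions `ℕ → ℝ` whose first `n` entries matter. -/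
theorem exists_index_average_le {n : ℕ} (hn : 0 < n) (a b : ℕ → ℝ)
    (ha0 : ∀ i < n, 0 ≤ a i) (hb0 : ∀ i < n, 0 ≤ b i)
    (haA : ∀ i j, i ≤ j → j < n → a j ≤ a i)
    (hbA : ∀ i j, i ≤ j → j < n → b j ≤ b i)
    (hmaj : ∀ k ≤ n, ∑ i ∈ Finset.range k, b i ≤ ∑ i ∈ Finset.range k, a i)
    (hsum : ∑ i ∈ Finset.range n, a i = ∑ i ∈ Finset.range n, b i)
    (h1 : b 0 < a 0) :
    ∃ k, 2 ≤ k ∧ k ≤ n ∧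
      (1 / (k : ℝ)) * ∑ i ∈ Finset.range k, a i ≤ b 0 ∧
      b 0 < (1 / ((k : ℝ) - 1)) * ∑ i ∈ Finset.range (k - 1), a i :=
  exists_index_average_le_general hn a b hbA hsum h1
end

section
/- Let γ ∈ [(k-1)/k, 1) and 2 ≤ k ≤ n. The n×n matrix A' whose first k-1 rows have entries γ/(k-1) in columns 1,...,k-1 and 1-γ in column k, whose k-th row has entries 1-γ in columns 1,...,k-1 and σ = 1-(k-1)(1-γ) in column k, which equals the identity on the remaining rows and columns, and has zeros elsewhere, is doubly stochastic and monotone. -/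
lemma sum_lt_const {n m : ℕ} (hm : m ≤ n) (a : ℝ) :
    ∑ j : Fin n, (if (j : ℕ) < m then a else 0) = m * a := by
  rw [Fin.sum_univ_eq_sum_range (fun j => if j < m then a else 0) n, ← Finset.sum_filter]
  have h : (Finset.range n).filter (fun i => i < m) = Finset.range m := by
    ext i; simp [Finset.mem_filter, Finset.mem_range]; omega
  rw [h, Finset.sum_const, Finset.card_range, nsmul_eq_mul]

lemma sum_eq_pt {n m : ℕ} (hm : m < n) (f : Fin n → ℝ) :
    ∑ j : Fin n, (if (j : ℕ) = m then f j else 0) = f ⟨m, hm⟩ := by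
  have h : ∀ j : Fin n, ((j : ℕ) = m) = (j = ⟨m, hm⟩) := fun j => by
    simp [Fin.ext_iff]
  simp only [h]
  simp

lemma row_struct {n m : ℕ} (hm : m < n) (a b : ℝ) (x : Fin n → ℝ) :
    ∑ j : Fin n, (if (j : ℕ) < m then a else if (j : ℕ) = m then b else 0) * x j
      = a * (∑ j : Fin n, if (j : ℕ) < m then x j else 0) + b * x ⟨m, hm⟩ := by
  have h : ∀ j : Fin n,
      (if (j : ℕ) < m then a else if (j : ℕ) = m then b else 0) * x j
        = a * (if (j : ℕ) < m then x j else 0) + (if (j : ℕ) = m then b * x j else 0) := by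
    intro j
    by_cases h1 : (j : ℕ) < m
    · have h2 : ¬((j : ℕ) = m) := by omega
      rw [if_pos h1, if_pos h1, if_neg h2]; ring
    · by_cases h2 : (j : ℕ) = m <;> simp [h1, h2]
  simp only [h]
  rw [Finset.sum_add_distrib, ← Finset.mul_sum, sum_eq_pt hm (fun j => b * x j)]

lemma sum_struct_const {n m : ℕ} (hm : m < n) (a b : ℝ) :
    ∑ j : Fin n, (if (j : ℕ) < m then a else if (j : ℕ) = m then b else 0) = m * a + b := by
  have := row_struct hm a b (fun _ => 1)
  simp only [mul_one] at this
  rw [this, sum_lt_const (le_of_lt hm) 1]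
  ring

private noncomputable def Mmat (n k : ℕ) (γ : ℝ) : Matrix (Fin n) (Fin n) ℝ := fun i j =>
  if (i : ℕ) < k - 1 then
    (if (j : ℕ) < k - 1 then γ / ((k : ℝ) - 1)
     else if (j : ℕ) = k - 1 then 1 - γ else 0)
  else if (i : ℕ) = k - 1 then
    (if (j : ℕ) < k - 1 then 1 - γ
     else if (j : ℕ) = k - 1 then 1 - ((k : ℝ) - 1) * (1 - γ) else 0)
  else (if j = i then 1 else 0)

private lemma basic_facts {k : ℕ} {γ : ℝ} (hk2 : 2 ≤ k)
    (hγl : ((k : ℝ) - 1) / (k : ℝ) ≤ γ) (hγr : γ < 1) :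
    0 < (k : ℝ) - 1 ∧ ((k : ℝ) - 1) ≤ γ * (k : ℝ) ∧ 0 ≤ γ ∧
      0 ≤ 1 - ((k : ℝ) - 1) * (1 - γ) := by
  have hk1 : (2 : ℝ) ≤ (k : ℝ) := by exact_mod_cast hk2
  have hc : 0 < (k : ℝ) - 1 := by linarith
  have hk0 : 0 < (k : ℝ) := by linarith
  have hd : ((k : ℝ) - 1) ≤ γ * (k : ℝ) := by
    have := (div_le_iff₀ hk0).mp hγl
    linarith
  have hγ0 : 0 ≤ γ := by nlinarith
  refine ⟨hc, hd, hγ0, by nlinarith⟩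

private lemma cast_k {k : ℕ} (hk2 : 2 ≤ k) : ((k - 1 : ℕ) : ℝ) = (k : ℝ) - 1 := by
  have h1 : 1 ≤ k := by omega
  push_cast [Nat.cast_sub h1]
  ring

private lemma Mds {n k : ℕ} (hk2 : 2 ≤ k) (hkn : k ≤ n) {γ : ℝ}
    (hγl : ((k : ℝ) - 1) / (k : ℝ) ≤ γ) (hγr : γ < 1) :
    DoublyStochastic (Mmat n k γ) := by
  obtain ⟨hc, hd, hγ0, hσ⟩ := basic_facts hk2 hγl hγr
  have hb : 0 ≤ 1 - γ := by linarith
  have hm : k - 1 < n := by omega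
  have hck : ((k - 1 : ℕ) : ℝ) = (k : ℝ) - 1 := cast_k hk2
  have hcc : ((k : ℝ) - 1) * (γ / ((k : ℝ) - 1)) = γ := mul_div_cancel₀ γ (ne_of_gt hc)
  refine ⟨?_, ?_, ?_⟩
  · intro i j
    simp only [Mmat]
    split_ifs <;> positivity
  · intro i
    by_cases h1 : (i : ℕ) < k - 1
    · simp only [Mmat, if_pos h1]
      rw [sum_struct_const hm, hck, hcc]; ring
    · by_cases h2 : (i : ℕ) = k - 1
      · simp only [Mmat, if_neg h1, if_pos h2]
        rw [sum_struct_const hm, hck]; ring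
      · simp only [Mmat, if_neg h1, if_neg h2]
        simp
  · intro j
    by_cases h1 : (j : ℕ) < k - 1
    · have he : ∀ i : Fin n, Mmat n k γ i j
          = (if (i : ℕ) < k - 1 then γ / ((k : ℝ) - 1)
             else if (i : ℕ) = k - 1 then 1 - γ else 0) := by
        intro i
        simp only [Mmat]
        by_cases g1 : (i : ℕ) < k - 1
        · simp [g1, h1]
        · by_cases g2 : (i : ℕ) = k - 1
          · simp [g1, g2, h1]
          · have : ¬ (j = i) := by
              intro h; subst h; omega
            simp [g1, g2, this]
      rw [Finset.sum_congr rfl (fun i _ => he i), sum_struct_const hm, hck, hcc]; ring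
    · by_cases h2 : (j : ℕ) = k - 1
      · have he : ∀ i : Fin n, Mmat n k γ i j
            = (if (i : ℕ) < k - 1 then 1 - γ
               else if (i : ℕ) = k - 1 then 1 - ((k : ℝ) - 1) * (1 - γ) else 0) := by
          intro i
          simp only [Mmat]
          by_cases g1 : (i : ℕ) < k - 1
          · simp [g1, h1, h2]
          · by_cases g2 : (i : ℕ) = k - 1
            · simp [g1, g2, h1, h2]
            · have : ¬ (j = i) := by
                intro h; subst h; omega
              simp [g1, g2, this]
        rw [Finset.sum_congr rfl (fun i _ => he i), sum_struct_const hm, hck]; ring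
      · have he : ∀ i : Fin n, Mmat n k γ i j = (if i = j then 1 else 0) := by
          intro i
          simp only [Mmat]
          by_cases g1 : (i : ℕ) < k - 1
          · have : ¬ (i = j) := by
              intro h; subst h; omega
            simp [g1, h1, h2, this]
          · by_cases g2 : (i : ℕ) = k - 1
            · have : ¬ (i = j) := by
                intro h; subst h; omega
              simp [g1, g2, h1, h2, this]
            · simp [g1, g2, eq_comm]
        rw [Finset.sum_congr rfl (fun i _ => he i)]
        simp

private lemma Mmono {n k : ℕ} (hk2 : 2 ≤ k) (hkn : k ≤ n) {γ : ℝ}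
    (hγl : ((k : ℝ) - 1) / (k : ℝ) ≤ γ) (hγr : γ < 1) :
    MonotoneMatrix (Mmat n k γ) := by
  obtain ⟨hc, hd, hγ0, hσ⟩ := basic_facts hk2 hγl hγr
  have hb : 0 ≤ 1 - γ := by linarith
  have hm : k - 1 < n := by omega
  have hck : ((k - 1 : ℕ) : ℝ) = (k : ℝ) - 1 := cast_k hk2
  intro x hx0 hxm i j hij
  set K : Fin n := ⟨k - 1, hm⟩ with hK
  set S : ℝ := ∑ j : Fin n, (if (j : ℕ) < k - 1 then x j else 0) with hS
  -- mulVec formulas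
  have hv : ∀ i : Fin n, (Mmat n k γ).mulVec x i = ∑ j, Mmat n k γ i j * x j := by
    intro i; rfl
  have hlt : ∀ i : Fin n, (i : ℕ) < k - 1 →
      (Mmat n k γ).mulVec x i = (γ / ((k : ℝ) - 1)) * S + (1 - γ) * x K := by
    intro i hi
    rw [hv]
    simp only [Mmat, if_pos hi]
    exact row_struct hm _ _ x
  have heq : (Mmat n k γ).mulVec x K
      = (1 - γ) * S + (1 - ((k : ℝ) - 1) * (1 - γ)) * x K := by
    rw [hv]
    have h1 : ¬ ((K : ℕ) < k - 1) := by simp [hK]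
    have h2 : (K : ℕ) = k - 1 := rfl
    simp only [Mmat, if_neg h1, if_pos h2]
    exact row_struct hm _ _ x
  have hgt : ∀ i : Fin n, k - 1 < (i : ℕ) → (Mmat n k γ).mulVec x i = x i := by
    intro i hi
    rw [hv]
    have h1 : ¬ ((i : ℕ) < k - 1) := by omega
    have h2 : ¬ ((i : ℕ) = k - 1) := by omega
    simp only [Mmat, if_neg h1, if_neg h2]
    simp [ite_mul]
  -- key sum bound
  have hSb : ((k : ℝ) - 1) * x K ≤ S := by
    have : ∑ j : Fin n, (if (j : ℕ) < k - 1 then x K else 0) ≤ S := by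
      rw [hS]
      apply Finset.sum_le_sum
      intro l _
      by_cases hl : (l : ℕ) < k - 1
      · simp only [if_pos hl]
        exact hxm l K (by rw [Fin.le_def]; show (l : ℕ) ≤ k - 1; omega)
      · simp [hl]
    rwa [sum_lt_const (by omega) (x K), hck] at this
  have hxK0 : 0 ≤ x K := hx0 K
  -- row k-1 value ≥ x K
  have hmid : x K ≤ (1 - γ) * S + (1 - ((k : ℝ) - 1) * (1 - γ)) * x K := by
    nlinarith [mul_le_mul_of_nonneg_left hSb hb]
  -- row < k-1 value ≥ row k-1 value
  have hkey : (1 - γ) * S + (1 - ((k : ℝ) - 1) * (1 - γ)) * x K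
      ≤ (γ / ((k : ℝ) - 1)) * S + (1 - γ) * x K := by
    have hprod : 0 ≤ (γ * (k : ℝ) - ((k : ℝ) - 1)) * (S - ((k : ℝ) - 1) * x K) :=
      mul_nonneg (by linarith) (by linarith)
    have h2 : 0 ≤ (γ * (k : ℝ) - ((k : ℝ) - 1)) * (S - ((k : ℝ) - 1) * x K) / ((k : ℝ) - 1) :=
      div_nonneg hprod hc.le
    have expand : (γ / ((k : ℝ) - 1)) * S + (1 - γ) * x K
        - ((1 - γ) * S + (1 - ((k : ℝ) - 1) * (1 - γ)) * x K)
        = (γ * (k : ℝ) - ((k : ℝ) - 1)) * (S - ((k : ℝ) - 1) * x K) / ((k : ℝ) - 1) := by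
      field_simp
      ring
    linarith [expand, h2]
  -- case analysis
  by_cases hi1 : (i : ℕ) < k - 1
  · by_cases hj1 : (j : ℕ) < k - 1
    · rw [hlt i hi1, hlt j hj1]
    · by_cases hj2 : (j : ℕ) = k - 1
      · have : j = K := by simp [hK, Fin.ext_iff, hj2]
        rw [hlt i hi1, this, heq]
        exact hkey
      · have hj3 : k - 1 < (j : ℕ) := by omega
        rw [hlt i hi1, hgt j hj3]
        have h1 : x j ≤ x K := hxm K j (by rw [Fin.le_def]; show k - 1 ≤ (j : ℕ); omega)
        linarith [hmid, hkey]
  · by_cases hi2 : (i : ℕ) = k - 1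
    · have hiK : i = K := by simp [hK, Fin.ext_iff, hi2]
      by_cases hj1 : (j : ℕ) < k - 1
      · exfalso; have := Fin.le_def.mp hij; omega
      · by_cases hj2 : (j : ℕ) = k - 1
        · have hjK : j = K := by simp [hK, Fin.ext_iff, hj2]
          rw [hiK, hjK]
        · have hj3 : k - 1 < (j : ℕ) := by omega
          rw [hiK, heq, hgt j hj3]
          have h1 : x j ≤ x K := hxm K j (by rw [Fin.le_def]; show k - 1 ≤ (j : ℕ); omega)
          linarith [hmid]
    · have hi3 : k - 1 < (i : ℕ) := by omega
      have hj3 : k - 1 < (j : ℕ) := by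
        have := Fin.le_def.mp hij; omega
      rw [hgt i hi3, hgt j hj3]
      exact hxm i j hij

/-- the explicit matrix `A'` from the proof of the monotone HLP theorem
is doubly stochastic and monotone. Rows/columns are 0-based: the first `k-1` rows
have entries `γ/(k-1)` in the first `k-1` columns and `1-γ` in column `k-1` (the `k`-th
column); row `k-1` has entries `1-γ` in the first `k-1` columns and `σ = 1-(k-1)(1-γ)`
on the diagonal; the remaining rows coincide with the identity. -/
theorem explicit_matrix_doublyStochastic_monotone {n k : ℕ} (hk2 : 2 ≤ k) (hkn : k ≤ n)
    (γ : ℝ) (hγl : ((k : ℝ) - 1) / (k : ℝ) ≤ γ) (hγr : γ < 1) :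
    DoublyStochastic (fun i j : Fin n =>
      if (i : ℕ) < k - 1 then
        (if (j : ℕ) < k - 1 then γ / ((k : ℝ) - 1)
         else if (j : ℕ) = k - 1 then 1 - γ else 0)
      else if (i : ℕ) = k - 1 then
        (if (j : ℕ) < k - 1 then 1 - γ
         else if (j : ℕ) = k - 1 then 1 - ((k : ℝ) - 1) * (1 - γ) else 0)
      else (if j = i then 1 else 0)) ∧
    MonotoneMatrix (fun i j : Fin n =>
      if (i : ℕ) < k - 1 then
        (if (j : ℕ) < k - 1 then γ / ((k : ℝ) - 1)
         else if (j : ℕ) = k - 1 then 1 - γ else 0)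
      else if (i : ℕ) = k - 1 then
        (if (j : ℕ) < k - 1 then 1 - γ
         else if (j : ℕ) = k - 1 then 1 - ((k : ℝ) - 1) * (1 - γ) else 0)
      else (if j = i then 1 else 0)) := by
  exact ⟨Mds hk2 hkn hγl hγr, Mmono hk2 hkn hγl hγr⟩
end

section
/- Let X be a Banach function space over (0,∞) and f ∈ X̃ + L^∞, where X̃ = {f : f̃ ∈ X} with norm ‖f‖_{X̃} = ‖f̃‖_X and f̃(t) = ess sup_{s≥t}|f(s)|. Then for every t > 0, K(t, f; X̃, L^∞) = K(t, f̃; X, L^∞), where K is the Peetre K-functional. -/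
open MeasureTheory ENNReal

/-- The nonincreasing majorant `f̃(t) = ess sup_{s ≥ t} |f(s)|`. -/
noncomputable def majorant (f : ℝ → ℝ) (t : ℝ) : ℝ :=
  essSup (fun s => |f s|) (MeasureTheory.volume.restrict (Set.Ici t))

/-- An abstract Banach function norm over `(0,∞)` (with values in `ℝ≥0∞`):
a lattice monotone, subadditive, absolutely homogeneous functional. -/
structure BanachFunctionNorm where
  N : (ℝ → ℝ) → ℝ≥0∞
  mono : ∀ f g : ℝ → ℝ,
    (∀ᵐ t ∂(MeasureTheory.volume.restrict (Set.Ioi (0 : ℝ))), |g t| ≤ |f t|) → N g ≤ N f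
  add_le : ∀ f g : ℝ → ℝ, N (f + g) ≤ N f + N g
  smul_eq : ∀ (c : ℝ) (f : ℝ → ℝ), N (c • f) = ENNReal.ofReal |c| * N f

/-- The Peetre K-functional for a couple of function norms. -/
noncomputable def Kfun (t : ℝ) (f : ℝ → ℝ) (N₀ N₁ : (ℝ → ℝ) → ℝ≥0∞) : ℝ≥0∞ :=
  ⨅ (g : (ℝ → ℝ) × (ℝ → ℝ)) (_ : f = g.1 + g.2), N₀ g.1 + ENNReal.ofReal t * N₁ g.2

/-- The `L^∞` norm over `(0,∞)`. -/
noncomputable def LinfNorm (f : ℝ → ℝ) : ℝ≥0∞ :=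
  essSup (fun t => ENNReal.ofReal |f t|) (MeasureTheory.volume.restrict (Set.Ioi (0 : ℝ)))

/-! Both K-functionals equal `inf_{a ≥ 0} (‖(f̃ - a)₊‖_X + a t)`. For a fixed `L^∞` budget `a`,
the best splitting of a function is its truncation at height `a`, with remainder of modulus
`(|φ| - a)₊`. On the `X̃` side the majorant of that remainder is `(f̃ - a)₊`, and conversely every
splitting `f = g + h` with `|h| ≤ a` has `(f̃ - a)₊ ≤ g̃` on `(0, ∞)`, because `|h| ≤ a` a.e. on
each `[s, ∞)`, `s > 0`. Since `majorant` takes the junk value `0` on essentially unbounded tails,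
each comparison of majorants also has to transfer essential boundedness. -/

open Filter NNReal

section EssSupAbs

variable {α : Type*} [MeasurableSpace α] {μ : Measure α} {φ ψ : α → ℝ}

lemma isBoundedUnder_abs_of_ae_le {c : ℝ} (h : ∀ᵐ x ∂μ, |φ x| ≤ |ψ x| + c)
    (hψ : IsBoundedUnder (· ≤ ·) (ae μ) fun x => |ψ x|) :
    IsBoundedUnder (· ≤ ·) (ae μ) fun x => |φ x| := by
  obtain ⟨b, hb⟩ := hψ
  exact ⟨b + c, eventually_map.2 <| (h.and (eventually_map.1 hb)).mono fun x hx => by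
    dsimp only at hx ⊢; linarith [hx.1, hx.2]⟩

lemma essSup_abs_of_not_isBoundedUnder (h : ¬IsBoundedUnder (· ≤ ·) (ae μ) fun x => |φ x|) :
    essSup (fun x => |φ x|) μ = 0 :=
  Real.limsup_of_not_isBoundedUnder h

variable [(ae μ).NeBot]

lemma essSup_abs_nonneg : 0 ≤ essSup (fun x => |φ x|) μ := by
  by_cases h : IsBoundedUnder (· ≤ ·) (ae μ) fun x => |φ x|
  · obtain ⟨x, hx⟩ := (ae_le_essSup h).exists
    exact (abs_nonneg _).trans hx
  · exact (essSup_abs_of_not_isBoundedUnder h).ge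

lemma essSup_abs_le {c : ℝ} (h : ∀ᵐ x ∂μ, |φ x| ≤ c) : essSup (fun x => |φ x|) μ ≤ c :=
  essSup_le_of_ae_le c h (isCoboundedUnder_le_of_le _ fun x => abs_nonneg (φ x))

lemma essSup_abs_sub_le_of_ae_abs_le {c : ℝ} (hc : 0 ≤ c) (hφ : ∀ᵐ x ∂μ, |φ x| ≤ |ψ x| + c)
    (hψ : ∀ᵐ x ∂μ, |ψ x| ≤ |φ x| + c) :
    max (essSup (fun x => |φ x|) μ - c) 0 ≤ essSup (fun x => |ψ x|) μ := by
  refine max_le ?_ essSup_abs_nonneg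
  by_cases hb : IsBoundedUnder (· ≤ ·) (ae μ) fun x => |ψ x|
  · have : essSup (fun x => |φ x|) μ ≤ essSup (fun x => |ψ x|) μ + c :=
      essSup_abs_le <| (hφ.and (ae_le_essSup hb)).mono fun x hx => by linarith [hx.1, hx.2]
    linarith
  · have hφb : ¬IsBoundedUnder (· ≤ ·) (ae μ) fun x => |φ x| :=
      fun h => hb (isBoundedUnder_abs_of_ae_le hψ h)
    rw [essSup_abs_of_not_isBoundedUnder hφb, essSup_abs_of_not_isBoundedUnder hb]
    linarith

lemma essSup_abs_le_of_ae_abs_le_posPart {a : ℝ} (hψ : ∀ᵐ x ∂μ, |ψ x| ≤ max (|φ x| - a) 0)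
    (hφ : ∀ᵐ x ∂μ, |φ x| ≤ |ψ x| + a) :
    essSup (fun x => |ψ x|) μ ≤ max (essSup (fun x => |φ x|) μ - a) 0 := by
  by_cases hb : IsBoundedUnder (· ≤ ·) (ae μ) fun x => |φ x|
  · exact essSup_abs_le <| (hψ.and (ae_le_essSup hb)).mono fun x hx =>
      hx.1.trans (max_le_max (by linarith [hx.2]) le_rfl)
  · have hψb : ¬IsBoundedUnder (· ≤ ·) (ae μ) fun x => |ψ x| :=
      fun h => hb (isBoundedUnder_abs_of_ae_le hφ h)
    rw [essSup_abs_of_not_isBoundedUnder hψb]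
    exact le_max_right _ _

end EssSupAbs

instance (t : ℝ) : (ae (volume.restrict (Set.Ici t))).NeBot :=
  ae_restrict_neBot.2 (by simp [Real.volume_Ici])

lemma majorant_nonneg (φ : ℝ → ℝ) (t : ℝ) : 0 ≤ majorant φ t :=
  essSup_abs_nonneg

def truncAt (a : ℝ) (φ : ℝ → ℝ) (s : ℝ) : ℝ := max (-a) (min a (φ s))

lemma abs_truncAt_le {a : ℝ} (ha : 0 ≤ a) (φ : ℝ → ℝ) (s : ℝ) : |truncAt a φ s| ≤ a :=
  abs_le.2 ⟨le_max_left _ _, max_le (by linarith) (min_le_left _ _)⟩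

lemma abs_sub_truncAt {a : ℝ} (ha : 0 ≤ a) (φ : ℝ → ℝ) (s : ℝ) :
    |φ s - truncAt a φ s| = max (|φ s| - a) 0 := by
  unfold truncAt
  rcases le_total a (φ s) with h | h
  · rw [min_eq_left h, max_eq_right (by linarith), abs_of_nonneg (by linarith),
      abs_of_nonneg (by linarith), max_eq_left (by linarith)]
  rcases le_total (φ s) (-a) with h' | h'
  · rw [min_eq_right h, max_eq_left h', abs_of_nonpos (by linarith), abs_of_nonpos (by linarith),
      max_eq_left (by linarith)]
    ring
  · rw [min_eq_right h, max_eq_right h', sub_self, abs_zero,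
      max_eq_right (by linarith [abs_le.2 ⟨h', h⟩])]

lemma LinfNorm_le {φ : ℝ → ℝ} {a : ℝ≥0}
    (h : ∀ᵐ s ∂volume.restrict (Set.Ioi 0), |φ s| ≤ a) : LinfNorm φ ≤ a := by
  rw [← ENNReal.ofReal_coe_nnreal]
  exact essSup_le_of_ae_le _ (h.mono fun s hs => ENNReal.ofReal_le_ofReal hs)

lemma ae_abs_le_LinfNorm {φ : ℝ → ℝ} (h : LinfNorm φ ≠ ⊤) :
    ∀ᵐ s ∂volume.restrict (Set.Ioi 0), |φ s| ≤ (LinfNorm φ).toNNReal := by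
  refine (ae_le_essSup (fun s => ENNReal.ofReal |φ s|)).mono fun s hs => ?_
  rw [ENNReal.coe_toNNReal_eq_toReal]
  calc |φ s| = (ENNReal.ofReal |φ s|).toReal := (ENNReal.toReal_ofReal (abs_nonneg _)).symm
    _ ≤ (LinfNorm φ).toReal := ENNReal.toReal_mono h hs

/-- `P a` is the least `N₀`-cost of a splitting `φ = u + v` with `‖v‖_∞ ≤ a`. -/
theorem Kfun_LinfNorm_eq_iInf {N₀ : (ℝ → ℝ) → ℝ≥0∞} {φ : ℝ → ℝ} {t : ℝ} (ht : 0 < t)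
    (P : ℝ≥0 → ℝ≥0∞) (hsplit : ∀ a : ℝ≥0, ∃ u v, φ = u + v ∧ N₀ u ≤ P a ∧ LinfNorm v ≤ a)
    (hlower : ∀ (u v : ℝ → ℝ) (a : ℝ≥0), φ = u + v →
      (∀ᵐ s ∂volume.restrict (Set.Ioi 0), |v s| ≤ a) → P a ≤ N₀ u) :
    Kfun t φ N₀ LinfNorm = ⨅ a : ℝ≥0, P a + ENNReal.ofReal t * a := by
  apply le_antisymm
  · refine le_iInf fun a => ?_
    obtain ⟨u, v, huv, hu, hv⟩ := hsplit a
    exact (iInf₂_le (u, v) huv).trans (add_le_add hu (mul_le_mul_right hv _))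
  · refine le_iInf₂ fun ⟨u, v⟩ huv => ?_
    by_cases hv : LinfNorm v = ⊤
    · simp [hv, ENNReal.mul_top, ht]
    refine (iInf_le _ (LinfNorm v).toNNReal).trans (add_le_add ?_ ?_)
    · exact hlower u v _ huv (ae_abs_le_LinfNorm hv)
    · rw [ENNReal.coe_toNNReal hv]

lemma max_abs_add_sub_le_of_abs_le {x y a : ℝ} (hy : |y| ≤ a) : max (|x + y| - a) 0 ≤ |x| :=
  max_le (by linarith [abs_add_le x y]) (abs_nonneg _)

theorem Kfun_LinfNorm_eq_iInf_posPart (X : BanachFunctionNorm) (φ : ℝ → ℝ) {t : ℝ}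
    (ht : 0 < t) :
    Kfun t φ X.N LinfNorm =
      ⨅ a : ℝ≥0, X.N (fun s => max (|φ s| - a) 0) + ENNReal.ofReal t * a := by
  refine Kfun_LinfNorm_eq_iInf ht _ (fun a => ⟨fun s => φ s - truncAt a φ s, truncAt a φ,
    funext fun s => (sub_add_cancel _ _).symm, ?_, ?_⟩) ?_
  · refine X.mono _ _ (Eventually.of_forall fun s => ?_)
    rw [abs_sub_truncAt a.coe_nonneg]
    exact (abs_of_nonneg (le_max_right _ _)).ge
  · exact LinfNorm_le (Eventually.of_forall (abs_truncAt_le a.coe_nonneg φ))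
  · rintro u v a rfl hv
    refine X.mono _ _ (hv.mono fun s hs => ?_)
    rw [abs_of_nonneg (le_max_right _ _)]
    exact max_abs_add_sub_le_of_abs_le hs

theorem Kfun_majorant_LinfNorm_eq_iInf (X : BanachFunctionNorm) (f : ℝ → ℝ) {t : ℝ} (ht : 0 < t) :
    Kfun t f (fun g => X.N (majorant g)) LinfNorm =
      ⨅ a : ℝ≥0, X.N (fun s => max (majorant f s - a) 0) + ENNReal.ofReal t * a := by
  refine Kfun_LinfNorm_eq_iInf ht _ (fun a => ⟨fun s => f s - truncAt a f s, truncAt a f,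
    funext fun s => (sub_add_cancel _ _).symm, ?_, ?_⟩) ?_
  · refine X.mono _ _ (Eventually.of_forall fun s => ?_)
    rw [abs_of_nonneg (majorant_nonneg _ _), abs_of_nonneg (le_max_right _ _)]
    refine essSup_abs_le_of_ae_abs_le_posPart (Eventually.of_forall fun x => ?_)
      (Eventually.of_forall fun x => ?_) <;> rw [abs_sub_truncAt a.coe_nonneg]
    linarith [le_max_left (|f x| - a) 0]
  · exact LinfNorm_le (Eventually.of_forall (abs_truncAt_le a.coe_nonneg f))
  · rintro u v a rfl hv
    refine X.mono _ _ ((ae_restrict_iff' measurableSet_Ioi).2 (Eventually.of_forall fun s hs => ?_))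
    have hvs : ∀ᵐ x ∂volume.restrict (Set.Ici s), |v x| ≤ a :=
      ae_mono (Measure.restrict_mono (Set.Ici_subset_Ioi.2 hs) le_rfl) hv
    rw [abs_of_nonneg (majorant_nonneg _ _), abs_of_nonneg (le_max_right _ _)]
    refine essSup_abs_sub_le_of_ae_abs_le a.coe_nonneg (hvs.mono fun x hx => ?_)
      (hvs.mono fun x hx => ?_) <;> rw [Pi.add_apply]
    · linarith [abs_add_le (u x) (v x)]
    · linarith [show |u x| ≤ |u x + v x| + |v x| by simpa using abs_sub (u x + v x) (v x)]

theorem K_tilde_eq_general (X : BanachFunctionNorm) (f : ℝ → ℝ) :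
    ∀ t : ℝ, 0 < t →
      Kfun t f (fun g => X.N (majorant g)) LinfNorm = Kfun t (majorant f) X.N LinfNorm := by
  intro t ht
  simp only [Kfun_majorant_LinfNorm_eq_iInf X f ht, Kfun_LinfNorm_eq_iInf_posPart X _ ht,
    abs_of_nonneg (majorant_nonneg f _)]

/-- for `f ∈ X̃ + L^∞`, `K(t, f; X̃, L^∞) = K(t, f̃; X, L^∞)`, where
`‖g‖_{X̃} = ‖g̃‖_X`. -/
theorem K_tilde_eq (X : BanachFunctionNorm) (f : ℝ → ℝ)
    (hf : ∃ g h : ℝ → ℝ, f = g + h ∧ X.N (majorant g) < ⊤ ∧ LinfNorm h < ⊤) :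
    ∀ t : ℝ, 0 < t →
      Kfun t f (fun g => X.N (majorant g)) LinfNorm = Kfun t (majorant f) X.N LinfNorm :=
  K_tilde_eq_general X f
end
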